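/- Let a be an alternative, σ = (a, σ_{−a}) and τ = (a, τ_{−a}) two linear orders over A sharing the same top alternative a, where σ_{−a}, τ_{−a} are linear orders over A∖{a}. Then for any selection/insertion sorting algorithm, f^{σ→τ}(ℓ) = f^{σ_{−a}→τ_{−a}}(ℓ) for all ℓ ∈ [m−2], and f^{σ→τ}(m−1) = 0, where |A| = m. -/

import Mathlib

/-- One step of a selection/insertion sorting algorithm at step index `k`
(0-indexed), transforming the current list `l` towards target ranking `τ`.
If `s = true` a selection-sort step is performed (promote the `τ`-most
preferred alternative of the suffix); if `s = false` an insertion-sort step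
is performed (promote the alternative currently at position `k`). In both
cases the picked alternative is promoted so that the top `k+1` alternatives
are in `τ`-order. The second component is the number of positions by which
the alternative was moved up. -/
def ddStep {α : Type*} [DecidableEq α] (τ l : List α) (k : ℕ) (s : Bool) :
    List α × ℕ :=
  match (if s then τ.filter (fun b => decide (b ∈ l.drop k)) else l.drop k).head? with
  | none => (l, 0)
  | some a =>
      let pre := l.take k
      let p := (pre.filter (fun b => decide (τ.idxOf b < τ.idxOf a))).length
      (pre.take p ++ a :: (pre.drop p ++ (l.drop k).erase a), l.idxOf a - p)

/-- The list maintained by the sorting algorithm `s : ℕ → Bool`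
(`true` = SEL, `false` = INS) after `k` steps, starting from `σ` with
target `τ`. -/
def ddRun {α : Type*} [DecidableEq α] (τ : List α) (s : ℕ → Bool) (σ : List α) :
    ℕ → List α
  | 0 => σ
  | k + 1 => (ddStep τ (ddRun τ s σ k) k (s k)).1

/-- The count function `f^{σ→τ}_𝒜(ℓ)`: the number of drag-and-drop operations
that move an alternative up by exactly `ℓ` positions during the execution of
the sorting algorithm `s` transforming `σ` into `τ`. -/
def countF {α : Type*} [DecidableEq α] (τ σ : List α) (s : ℕ → Bool) (ℓ : ℕ) : ℕ :=
  ((Finset.range τ.length).filter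
    (fun k => 0 < ℓ ∧ (ddStep τ (ddRun τ s σ k) k (s k)).2 = ℓ)).card

/-- Kendall's Tau distance between two rankings given as lists: the number of
ordered pairs `(a, b)` ranked `a` above `b` by `σ` but `b` above `a` by `τ`. -/
def kendall {α : Type*} [DecidableEq α] (σ τ : List α) : ℕ :=
  ((σ.toFinset ×ˢ σ.toFinset).filter
    (fun p => σ.idxOf p.1 < σ.idxOf p.2 ∧ τ.idxOf p.2 < τ.idxOf p.1)).card

/-!
Every drag-and-drop step keeps the current ranking in the shape `P ++ (σ without P)`: a prefix `P`
sorted by `τ`, above the unplaced alternatives in their `σ`-order. Moreover each placed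
alternative is `τ`-above every unplaced one that `σ` ranks above it, and the alternative picked
next (by selection or by insertion) has the same property. It follows that the picked alternative
`c` is moved up by exactly the number of alternatives ranked above `c` by `σ` and below `c` by
`τ`, whichever algorithm runs: the multiset of displacements is that of these inversion counts.
A common top alternative has no inversions, its removal does not change anybody else's count,
and with `m` alternatives every count is below `m - 1`.
-/

section ListLemmas

variable {α : Type*}

theorem List.Nodup.pairwise_idxOf_lt [DecidableEq α] {l : List α} (h : l.Nodup) :
    l.Pairwise fun x y => l.idxOf x < l.idxOf y :=
  List.pairwise_iff_getElem.mpr fun i j hi hj hij => by rwa [h.idxOf_getElem, h.idxOf_getElem]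

theorem List.Pairwise.exists_head?_eq {r : α → α → Prop} {l : List α} (hl : l.Pairwise r)
    {x : α} (hx : x ∈ l) : ∃ c ∈ l, l.head? = some c ∧ ∀ y ∈ l, y ≠ c → r c y := by
  obtain ⟨c, t, rfl⟩ := List.exists_cons_of_ne_nil (List.ne_nil_of_mem hx)
  refine ⟨c, List.mem_cons_self, rfl, fun y hy hyc => ?_⟩
  exact List.rel_of_pairwise_cons hl ((List.mem_cons.mp hy).resolve_left hyc)

theorem List.Pairwise.idxOf_eq_countP [DecidableEq α] {f : α → ℕ} {l : List α}
    (hl : l.Pairwise fun x y => f x < f y) {c : α} (hc : c ∈ l) :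
    l.idxOf c = l.countP fun x => f x < f c := by
  induction l with
  | nil => simp at hc
  | cons y t ih =>
    obtain ⟨hy, ht⟩ := List.pairwise_cons.mp hl
    by_cases hyc : y = c
    · subst hyc
      rw [List.idxOf_cons_self, List.countP_cons_of_neg (by simp), eq_comm, List.countP_eq_zero]
      exact fun x hx => by simpa using (hy x hx).le
    · have hct : c ∈ t := (List.mem_cons.mp hc).resolve_left (Ne.symm hyc)
      rw [List.idxOf_cons_ne _ hyc, ih ht hct, List.countP_cons_of_pos (by simpa using hy c hct)]

section DownwardClosed

variable {p : α → Bool} {l : List α}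

theorem List.Pairwise.take_countP (hl : l.Pairwise fun x y => p y → p x) :
    l.take (l.countP p) = l.filter p := by
  induction l with
  | nil => rfl
  | cons y t ih =>
    obtain ⟨hy, ht⟩ := List.pairwise_cons.mp hl
    by_cases hpy : p y
    · rw [List.countP_cons_of_pos hpy, List.take_succ_cons, ih ht, List.filter_cons_of_pos hpy]
    · have : ∀ x ∈ t, ¬ p x := fun x hx hpx => hpy (hy x hx hpx)
      rw [List.countP_cons_of_neg hpy, List.countP_eq_zero.mpr this,
        List.filter_cons_of_neg hpy, List.filter_eq_nil_iff.mpr this, List.take_zero]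

theorem List.Pairwise.drop_countP (hl : l.Pairwise fun x y => p y → p x) :
    l.drop (l.countP p) = l.filter fun x => !p x := by
  induction l with
  | nil => rfl
  | cons y t ih =>
    obtain ⟨hy, ht⟩ := List.pairwise_cons.mp hl
    by_cases hpy : p y
    · rw [List.countP_cons_of_pos hpy, List.drop_succ_cons, ih ht,
        List.filter_cons_of_neg (by simpa using hpy)]
    · have : ∀ x ∈ t, ¬ p x := fun x hx hpx => hpy (hy x hx hpx)
      rw [List.countP_cons_of_neg hpy, List.countP_eq_zero.mpr this, List.drop_zero,
        List.filter_cons_of_pos (by simpa using hpy),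
        List.filter_eq_self.mpr (by simpa using this)]

end DownwardClosed

theorem Finset.card_filter_range_eq_count_map {β : Type*} [DecidableEq β] (n : ℕ) (f : ℕ → β)
    (b : β) : ((Finset.range n).filter (f · = b)).card = ((List.range n).map f).count b := by
  rw [List.count, List.countP_map, List.countP_eq_length_filter]
  rfl

end ListLemmas

namespace DragAndDrop

variable {α : Type*} [DecidableEq α] {σ τ P : List α} {c : α}

def inversionsAbove (σ τ : List α) (c : α) : ℕ :=
  σ.countP fun b => σ.idxOf b < σ.idxOf c ∧ τ.idxOf c < τ.idxOf b

def IsAheadOfRest (σ τ P : List α) (b : α) : Prop :=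
  ∀ x ∈ σ, x ∉ P → x ≠ b → σ.idxOf x < σ.idxOf b → τ.idxOf b < τ.idxOf x

structure IsSortedPrefix (σ τ P : List α) : Prop where
  nodup : P.Nodup
  subset : P ⊆ σ
  sorted : P.Pairwise fun x y => τ.idxOf x < τ.idxOf y
  isAheadOfRest : ∀ b ∈ P, IsAheadOfRest σ τ P b

def insertByRank (τ P : List α) (c : α) : List α :=
  P.filter (fun b => τ.idxOf b < τ.idxOf c) ++
    c :: P.filter fun b => !decide (τ.idxOf b < τ.idxOf c)

theorem insertByRank_perm : (insertByRank τ P c).Perm (c :: P) :=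
  List.perm_middle.trans ((List.filter_append_perm _ P).cons c)

theorem exists_head?_eq_isAheadOfRest (hσ : σ.Nodup) (hστ : σ.Perm τ) {x : α} (hx : x ∈ σ)
    (hxP : x ∉ P) (s : Bool) :
    ∃ c, (if s then τ.filter (· ∈ σ.filter (· ∉ P)) else σ.filter (· ∉ P)).head? = some c ∧
      c ∈ σ ∧ c ∉ P ∧ IsAheadOfRest σ τ P c := by
  cases s
  · have hmemR : ∀ y ∈ σ, y ∉ P → y ∈ σ.filter (· ∉ P) := fun y hy hyP =>
      List.mem_filter.mpr ⟨hy, by simpa using hyP⟩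
    obtain ⟨c, hcR, hhead, hmin⟩ :=
      (hσ.pairwise_idxOf_lt.sublist List.filter_sublist).exists_head?_eq (hmemR x hx hxP)
    have hc : c ∈ σ ∧ c ∉ P := by simpa using hcR
    refine ⟨c, hhead, hc.1, hc.2, fun y hy hyP hyc hlt => ?_⟩
    exact absurd (hmin y (hmemR y hy hyP) hyc) (by omega)
  · have hmemF : ∀ y ∈ σ, y ∉ P → y ∈ τ.filter (· ∈ σ.filter (· ∉ P)) := fun y hy hyP =>
      List.mem_filter.mpr ⟨hστ.subset hy, by simpa using ⟨hy, hyP⟩⟩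
    obtain ⟨c, hcF, hhead, hmin⟩ :=
      (((hστ.nodup_iff.mp hσ).pairwise_idxOf_lt).sublist List.filter_sublist).exists_head?_eq
        (hmemF x hx hxP)
    have hc : c ∈ σ ∧ c ∉ P := by simpa using (List.mem_filter.mp hcF).2
    exact ⟨c, hhead, hc.1, hc.2, fun y hy hyP hyc _ => hmin y (hmemF y hy hyP) hyc⟩

theorem IsSortedPrefix.lt_of_not_lt (hστ : σ.Perm τ) (hP : IsSortedPrefix σ τ P) (hcP : c ∉ P)
    {b : α} (hb : b ∈ P) (hbc : ¬ τ.idxOf b < τ.idxOf c) : τ.idxOf c < τ.idxOf b := by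
  have : τ.idxOf b ≠ τ.idxOf c := fun h =>
    hcP ((List.idxOf_inj (hστ.subset (hP.subset hb))).mp h ▸ hb)
  omega

theorem IsSortedPrefix.insertByRank (hστ : σ.Perm τ) (hP : IsSortedPrefix σ τ P) (hc : c ∈ σ)
    (hcP : c ∉ P) (hcR : IsAheadOfRest σ τ P c) : IsSortedPrefix σ τ (insertByRank τ P c) := by
  have hlt {b : α} (hb : b ∈ P.filter fun b => !decide (τ.idxOf b < τ.idxOf c)) :
      τ.idxOf c < τ.idxOf b :=
    have := List.mem_filter.mp hb
    hP.lt_of_not_lt hστ hcP this.1 (by simpa using this.2)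
  refine ⟨insertByRank_perm.nodup_iff.mpr (List.nodup_cons.mpr ⟨hcP, hP.nodup⟩),
    fun x hx => ?_, ?_, ?_⟩
  · rcases List.mem_cons.mp (insertByRank_perm.subset hx) with rfl | hxP
    exacts [hc, hP.subset hxP]
  · refine List.pairwise_append.mpr ⟨hP.sorted.sublist List.filter_sublist,
      List.pairwise_cons.mpr ⟨fun b hb => hlt hb, hP.sorted.sublist List.filter_sublist⟩,
      fun x hx y hy => ?_⟩
    have hxc : τ.idxOf x < τ.idxOf c := by simpa using (List.mem_filter.mp hx).2
    rcases List.mem_cons.mp hy with rfl | hy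
    exacts [hxc, hxc.trans (hlt hy)]
  · intro b hb y hy hyP' hyb hσlt
    have hyP : y ∉ P := fun h => hyP' (insertByRank_perm.symm.subset (List.mem_cons_of_mem c h))
    rcases List.mem_cons.mp (insertByRank_perm.subset hb) with rfl | hbP
    · exact hcR y hy hyP hyb hσlt
    · exact hP.isAheadOfRest b hbP y hy hyP hyb hσlt

theorem IsSortedPrefix.filter_mem_perm (hP : IsSortedPrefix σ τ P) (hσ : σ.Nodup) :
    (σ.filter (· ∈ P)).Perm P :=
  (List.perm_ext_iff_of_nodup (hσ.filter _) hP.nodup).mpr fun x => by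
    simpa using fun hx => hP.subset hx

theorem idxOf_sub_countP_eq_inversionsAbove (hσ : σ.Nodup) (hστ : σ.Perm τ)
    (hP : IsSortedPrefix σ τ P) (hc : c ∈ σ) (hcP : c ∉ P) (hcR : IsAheadOfRest σ τ P c) :
    (P ++ σ.filter (· ∉ P)).idxOf c - P.countP (fun b => τ.idxOf b < τ.idxOf c) =
      inversionsAbove σ τ c := by
  set R := σ.filter (· ∉ P)
  have hidx : (P ++ R).idxOf c = P.length + R.countP fun x => σ.idxOf x < σ.idxOf c := by
    rw [List.idxOf_append_of_notMem hcP,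
      (hσ.pairwise_idxOf_lt.sublist List.filter_sublist).idxOf_eq_countP
        (List.mem_filter.mpr ⟨hc, by simpa using hcP⟩)]
  have hsplitP : P.length = P.countP (fun b => τ.idxOf b < τ.idxOf c) +
      P.countP fun b => τ.idxOf c < τ.idxOf b := by
    rw [List.length_eq_countP_add_countP (fun b => decide (τ.idxOf b < τ.idxOf c))]
    congr 1
    refine List.countP_congr fun b hb => ?_
    have := hP.lt_of_not_lt hστ hcP hb
    simp only [decide_not, Bool.not_eq_eq_eq_not, Bool.not_true, decide_eq_false_iff_not,
      decide_eq_true_eq]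
    omega
  -- an alternative placed in `P` is below `c` in `τ` exactly when `σ` ranks it above `c`
  have hplaced : (σ.filter (· ∈ P)).countP
      (fun b => σ.idxOf b < σ.idxOf c ∧ τ.idxOf c < τ.idxOf b) =
      P.countP fun b => τ.idxOf c < τ.idxOf b := by
    rw [(hP.filter_mem_perm hσ).countP_eq]
    refine List.countP_congr fun b hb => ?_
    have hbc : c ≠ b := fun h => hcP (h ▸ hb)
    have : σ.idxOf c ≠ σ.idxOf b := fun h => hbc ((List.idxOf_inj hc).mp h)
    have := hP.isAheadOfRest b hb c hc hcP hbc
    simp only [decide_eq_true_eq]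
    omega
  -- an unplaced alternative above `c` in `σ` is below `c` in `τ`
  have hunplaced : (σ.filter (fun x => !decide (x ∈ P))).countP
      (fun b => σ.idxOf b < σ.idxOf c ∧ τ.idxOf c < τ.idxOf b) =
      R.countP fun x => σ.idxOf x < σ.idxOf c := by
    simp only [R, decide_not]
    refine List.countP_congr fun x hx => ?_
    have hxP : x ∉ P := by simpa using (List.mem_filter.mp hx).2
    have := fun h =>
      hcR x (List.mem_of_mem_filter hx) hxP (ne_of_apply_ne σ.idxOf (ne_of_lt h)) h
    simp only [decide_eq_true_eq]
    tauto
  rw [inversionsAbove, List.countP_eq_countP_filter_add σ _ (· ∈ P), hplaced, hunplaced]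
  omega

theorem exists_ddStep_eq (hσ : σ.Nodup) (hστ : σ.Perm τ) (hP : IsSortedPrefix σ τ P)
    (hlen : P.length < σ.length) (s : Bool) :
    ∃ c P', IsSortedPrefix σ τ P' ∧ P'.Perm (c :: P) ∧
      ddStep τ (P ++ σ.filter (· ∉ P)) P.length s =
        (P' ++ σ.filter (· ∉ P'), inversionsAbove σ τ c) := by
  obtain ⟨x, hx, hxP⟩ : ∃ x ∈ σ, x ∉ P := by
    by_contra! h
    exact absurd (hσ.length_le_of_subset h) (by omega)
  obtain ⟨c, hhead, hc, hcP, hcR⟩ := exists_head?_eq_isAheadOfRest hσ hστ hx hxP s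
  refine ⟨c, _, hP.insertByRank hστ hc hcP hcR, insertByRank_perm, ?_⟩
  have hsorted : P.Pairwise fun x y =>
      decide (τ.idxOf y < τ.idxOf c) → decide (τ.idxOf x < τ.idxOf c) :=
    hP.sorted.imp fun hxy hy => by
      simp only [decide_eq_true_eq] at hy ⊢
      omega
  have hrest : (σ.filter (· ∉ P)).erase c = σ.filter (· ∉ insertByRank τ P c) := by
    rw [(hσ.filter _).erase_eq_filter, List.filter_filter]
    refine List.filter_congr fun y _ => ?_
    simp only [insertByRank_perm.mem_iff, List.mem_cons]
    by_cases hyc : y = c <;> simp [hyc]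
  simp only [ddStep, List.take_left, List.drop_left, hhead, ← List.countP_eq_length_filter]
  rw [hsorted.take_countP, hsorted.drop_countP, hrest,
    idxOf_sub_countP_eq_inversionsAbove hσ hστ hP hc hcP hcR]
  simp [insertByRank]

abbrev displacement (τ : List α) (s : ℕ → Bool) (σ : List α) (k : ℕ) : ℕ :=
  (ddStep τ (ddRun τ s σ k) k (s k)).2

theorem exists_ddRun_eq (hσ : σ.Nodup) (hστ : σ.Perm τ) (s : ℕ → Bool) {k : ℕ}
    (hk : k ≤ σ.length) :
    ∃ P, IsSortedPrefix σ τ P ∧ P.length = k ∧ ddRun τ s σ k = P ++ σ.filter (· ∉ P) ∧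
      ((List.range k).map (displacement τ s σ)).Perm (P.map (inversionsAbove σ τ)) := by
  induction k with
  | zero =>
    exact ⟨[], ⟨List.nodup_nil, by simp, List.Pairwise.nil, by simp⟩, rfl, by simp [ddRun],
      by simp⟩
  | succ k ih =>
    obtain ⟨P, hP, hlen, hrun, hdisp⟩ := ih (by omega)
    obtain ⟨c, P', hP', hperm, hstep⟩ := exists_ddStep_eq hσ hστ hP (by omega) (s k)
    have hstep' : ddStep τ (ddRun τ s σ k) k (s k) = _ := hlen ▸ hrun ▸ hstep
    refine ⟨P', hP', by simp [hperm.length_eq, hlen], by rw [ddRun, hstep'], ?_⟩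
    rw [List.range_succ, List.map_append, List.map_singleton, displacement, hstep']
    exact (hdisp.append_right _).trans
      ((List.perm_append_singleton _ _).trans (hperm.map (inversionsAbove σ τ)).symm)

theorem perm_map_displacement (hσ : σ.Nodup) (hστ : σ.Perm τ) (s : ℕ → Bool) :
    ((List.range σ.length).map (displacement τ s σ)).Perm (σ.map (inversionsAbove σ τ)) := by
  obtain ⟨P, hP, hlen, -, hdisp⟩ := exists_ddRun_eq hσ hστ s le_rfl
  exact hdisp.trans (((List.subperm_of_subset hP.nodup hP.subset).perm_of_length_le
    hlen.ge).map _)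

theorem countF_eq_count (hσ : σ.Nodup) (hστ : σ.Perm τ) (s : ℕ → Bool) {ℓ : ℕ} (hℓ : 0 < ℓ) :
    countF τ σ s ℓ = (σ.map (inversionsAbove σ τ)).count ℓ := by
  rw [← (perm_map_displacement hσ hστ s).count_eq, ← Finset.card_filter_range_eq_count_map,
    countF, ← hστ.length_eq]
  simp only [hℓ, true_and]

theorem map_inversionsAbove_cons {a : α} (ha : a ∉ σ) :
    (a :: σ).map (inversionsAbove (a :: σ) (a :: τ)) = 0 :: σ.map (inversionsAbove σ τ) := by
  refine congrArg₂ _ (by simp [inversionsAbove]) (List.map_congr_left fun c hc => ?_)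
  have hac : a ≠ c := fun h => ha (h ▸ hc)
  rw [inversionsAbove, List.countP_cons_of_neg (by simp), inversionsAbove]
  refine List.countP_congr fun b hb => ?_
  have hab : a ≠ b := fun h => ha (h ▸ hb)
  simp [List.idxOf_cons_ne _ hab, List.idxOf_cons_ne _ hac]

theorem inversionsAbove_lt_length (hc : c ∈ σ) : inversionsAbove σ τ c < σ.length := by
  rw [inversionsAbove, List.countP_eq_length_filter]
  exact List.length_filter_lt_length_iff_exists.mpr ⟨c, hc, by simp⟩

end DragAndDrop

theorem count_same_top_alternative_general {α : Type*} [DecidableEq α]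
    (m : ℕ) (a : α) (σ' τ' : List α)
    (hσ : (a :: σ').Nodup) (hperm : σ'.Perm τ')
    (hm : (a :: σ').length = m) (s : ℕ → Bool) :
    (∀ ℓ ∈ Finset.Icc 1 (m - 2), countF (a :: τ') (a :: σ') s ℓ = countF τ' σ' s ℓ)
      ∧ countF (a :: τ') (a :: σ') s (m - 1) = 0 := by
  open DragAndDrop in
  obtain ⟨ha, hσ'⟩ := List.nodup_cons.mp hσ
  have hcount {ℓ : ℕ} (hℓ : 0 < ℓ) :
      countF (a :: τ') (a :: σ') s ℓ = (σ'.map (inversionsAbove σ' τ')).count ℓ := by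
    rw [countF_eq_count hσ (hperm.cons a) s hℓ, map_inversionsAbove_cons ha,
      List.count_cons_of_ne hℓ.ne]
  refine ⟨fun ℓ hℓ => ?_, ?_⟩
  · have hℓ : 0 < ℓ := (Finset.mem_Icc.mp hℓ).1
    rw [hcount hℓ, countF_eq_count hσ' hperm s hℓ]
  · rcases Nat.eq_zero_or_pos (m - 1) with h0 | hpos
    · simp [h0, countF]
    · have hlen : σ'.length + 1 = m := by simpa using hm
      rw [hcount hpos, List.count_eq_zero, List.mem_map]
      rintro ⟨c, hc, hcm⟩
      have := inversionsAbove_lt_length (τ := τ') hc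
      omega

/-- If `σ = (a, σ₋ₐ)` and `τ = (a, τ₋ₐ)` share the same top
alternative `a`, then for any selection/insertion sorting algorithm `s`,
`f^{σ→τ}(ℓ) = f^{σ₋ₐ→τ₋ₐ}(ℓ)` for all `ℓ ∈ [m-2]`, and `f^{σ→τ}(m-1) = 0`,
where `m = |A|`. -/
theorem count_same_top_alternative {α : Type*} [DecidableEq α]
    (m : ℕ) (a : α) (σ' τ' : List α)
    (hσ : (a :: σ').Nodup) (hτ : (a :: τ').Nodup) (hperm : σ'.Perm τ')
    (hm : (a :: σ').length = m) (s : ℕ → Bool) :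
    (∀ ℓ ∈ Finset.Icc 1 (m - 2), countF (a :: τ') (a :: σ') s ℓ = countF τ' σ' s ℓ)
      ∧ countF (a :: τ') (a :: σ') s (m - 1) = 0 :=
  count_same_top_alternative_general m a σ' τ' hσ hperm hm s
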